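/- arXiv:0803.3693 — 3 statements merged into one kernel-verified Lean document; each statement's English description precedes it below -/
import Mathlib

section
/- Let (A_x)_{x∈S} be a family of subsets of {0,…,m−1} indexed by a finite set S of size n, and let M be the n×m 0-1 incidence matrix with M_{i,j}=1 iff j ∈ A_{x_i}. Let F be any field. If the 1-entries of M can be replaced by elements of F so that the resulting matrix M' has full row rank over F, then there exists an injective map σ : {1,…,n} → {0,…,m−1} with σ(i) ∈ A_{x_i} for all i. -/
/-!
Full row rank makes the rows of `M'` linearly independent; so are the rows indexed by any set `s`,
and they all vanish outside the neighbourhood `⋃_{i ∈ s} A i`, so restricting them to those columns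
loses no independence, and hence `|s| ≤ |⋃_{i ∈ s} A i|`. This is Hall's condition, and Hall's
marriage theorem provides the injective choice of representatives.
-/

theorem Matrix.linearIndependent_row_iff_rank_eq_card {K m n : Type*} [Field K] [Fintype m]
    [Fintype n] (M : Matrix m n K) : LinearIndependent K M.row ↔ M.rank = Fintype.card m := by
  rw [linearIndependent_iff_card_eq_finrank_span, M.rank_eq_finrank_span_row, Set.finrank, eq_comm]

theorem LinearIndependent.card_le_card_of_forall_notMem_eq_zero {R ι κ : Type*} [Ring R]
    [StrongRankCondition R] [Fintype ι] {v : ι → κ → R} (hv : LinearIndependent R v)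
    (T : Finset κ) (hT : ∀ i, ∀ j ∉ T, v i j = 0) : Fintype.card ι ≤ T.card := by
  let restrict : (κ → R) →ₗ[R] (T → R) := LinearMap.funLeft R R Subtype.val
  let supportedOn : Submodule R (κ → R) := ⨅ j ∉ T, LinearMap.ker (LinearMap.proj j)
  have hspan : Submodule.span R (Set.range v) ≤ supportedOn := by
    rw [Submodule.span_le]
    rintro _ ⟨i, rfl⟩
    simpa [supportedOn] using hT i
  have hdisj : Disjoint (Submodule.span R (Set.range v)) (LinearMap.ker restrict) := by
    rw [Submodule.disjoint_def]
    intro w hw hker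
    have hoff : ∀ j ∉ T, w j = 0 := by simpa [supportedOn] using hspan hw
    funext j
    by_cases hj : j ∈ T
    · exact congrFun hker ⟨j, hj⟩
    · exact hoff j hj
  simpa using (hv.map hdisj).fintype_card_le_finrank

theorem stmt_4 {F : Type} [Field F] (n m : ℕ) (A : Fin n → Finset (Fin m))
    (M' : Matrix (Fin n) (Fin m) F)
    (hsupp : ∀ i j, j ∉ A i → M' i j = 0)
    (hrank : M'.rank = n) :
    ∃ σ : Fin n → Fin m, Function.Injective σ ∧ ∀ i : Fin n, σ i ∈ A i := by
  classical
  have hrows : LinearIndependent F M'.row :=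
    M'.linearIndependent_row_iff_rank_eq_card.mpr (by rw [hrank, Fintype.card_fin])
  rw [← Finset.all_card_le_biUnion_card_iff_exists_injective]
  intro s
  have hsub : LinearIndependent F fun i : s => M' i := hrows.comp _ Subtype.val_injective
  simpa using hsub.card_le_card_of_forall_notMem_eq_zero (s.biUnion A) fun i j hj =>
    hsupp i j fun hij => hj (Finset.mem_biUnion.mpr ⟨i, i.2, hij⟩)
end

section
/- Let (A_x)_{x∈S} be a set system over {0,…,m−1}, |S| = n, admitting an injective choice function σ with σ(i) ∈ A_{x_i}, and suppose each A_{x_i} has at most k elements. Let F be a finite field. If the nonzero entries of the incidence matrix are replaced by independent uniformly random elements of F, then the resulting matrix M' has full row rank over F with probability at least 1 − n/|F|. -/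
/-!
The `n × n` minor of `M'` on the columns `σ` is the value, at the random entries, of the
determinant `P` of the corresponding minor of the generic matrix with indeterminates on the
support of `A`. `P` has total degree at most `n`, and `P ≠ 0` because at the indicator of the
transversal `{(i, σ i)}` the minor is the identity. Whenever the minor is nonsingular `M'` has
full row rank, so by Schwartz–Zippel rank deficiency has probability at most `n / |F|`.
-/

open scoped Classical

open Finset MvPolynomial Matrix

lemma MvPolynomial.totalDegree_det_le {n ι R : Type*} [Fintype n] [DecidableEq n] [CommRing R]
    {M : Matrix n n (MvPolynomial ι R)} {d : ℕ} (hM : ∀ i j, (M i j).totalDegree ≤ d) :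
    M.det.totalDegree ≤ Fintype.card n * d := by
  rw [det_apply]
  refine totalDegree_finsetSum_le fun τ _ => (totalDegree_smul_le _ _).trans ?_
  refine (totalDegree_finsetProd _ _).trans ?_
  simpa using Finset.sum_le_sum fun i (_ : i ∈ univ) => hM (τ i) i

lemma MvPolynomial.schwartz_zippel_totalDegree_fintype {ι F : Type*} [Fintype ι] [DecidableEq ι]
    [Field F] [Fintype F] {p : MvPolynomial ι F} (hp : p ≠ 0) :
    (#{x : ι → F | eval x p = 0} : ℝ) / Fintype.card (ι → F)
      ≤ p.totalDegree / Fintype.card F := by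
  set e := Fintype.equivFin ι
  have hp' : renameEquiv F e p ≠ 0 := (renameEquiv F e).injective.ne_iff.mpr hp
  have hsz := schwartz_zippel_totalDegree hp' univ
  rw [Fintype.piFinset_univ, totalDegree_renameEquiv] at hsz
  have hcard : #{f : Fin (Fintype.card ι) → F | eval f (renameEquiv F e p) = 0}
      = #{x : ι → F | eval x p = 0} := by
    refine card_equiv (e.arrowCongr (Equiv.refl F)).symm fun f => ?_
    simp [eval_rename]; rfl
  rw [hcard, card_univ] at hsz
  have := NNRat.cast_le (K := ℝ) |>.mpr hsz
  push_cast at this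
  simpa [Fintype.card_fun] using this

lemma Matrix.rank_eq_card_of_det_submatrix_ne_zero {m n K : Type*} [Fintype m] [Fintype n]
    [DecidableEq m] [Field K] (M : Matrix m n K) (c : m → n) (h : (M.submatrix id c).det ≠ 0) :
    M.rank = Fintype.card m :=
  M.rank_le_card_height.antisymm <|
    (rank_of_det_ne_zero h).symm.le.trans (rank_submatrix_le M id c)

section GenericMatrix

variable {ι κ R : Type*} [DecidableEq κ] [CommRing R] (A : ι → Finset κ)

noncomputable def genericMatrix : Matrix ι κ (MvPolynomial (ι × κ) R) :=
  of fun i j => if j ∈ A i then X (i, j) else 0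

lemma genericMatrix_map_eval (g : ι × κ → R) :
    (genericMatrix A).map (eval g) = of fun i j => if j ∈ A i then g (i, j) else 0 := by
  ext i j
  simp only [genericMatrix, map_apply, of_apply]
  split_ifs <;> simp

variable [Fintype ι] [DecidableEq ι]

lemma eval_det_genericMatrix_submatrix (g : ι × κ → R) (σ : ι → κ) :
    eval g ((genericMatrix A).submatrix id σ).det
      = ((of fun i j => if j ∈ A i then g (i, j) else 0).submatrix id σ).det := by
  rw [RingHom.map_det, RingHom.mapMatrix_apply, ← submatrix_map, genericMatrix_map_eval]

variable [Nontrivial R]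

lemma totalDegree_det_genericMatrix_submatrix_le (σ : ι → κ) :
    ((genericMatrix (R := R) A).submatrix id σ).det.totalDegree ≤ Fintype.card ι := by
  simpa using totalDegree_det_le (d := 1) fun i j => by
    simp only [genericMatrix, submatrix_apply, of_apply]
    split_ifs
    · exact (totalDegree_X _).le
    · simp

lemma det_genericMatrix_submatrix_ne_zero {σ : ι → κ} (hσ : Function.Injective σ)
    (hmem : ∀ i, σ i ∈ A i) : ((genericMatrix (R := R) A).submatrix id σ).det ≠ 0 := by
  set x : ι × κ → R := fun p => if p.2 = σ p.1 then 1 else 0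
  have hid : (of fun i j => if j ∈ A i then x (i, j) else 0).submatrix id σ = 1 := by
    ext i j
    by_cases hij : i = j
    · subst hij; simp [x, hmem]
    · simp [x, hij, hσ.eq_iff, Ne.symm hij, one_apply]
  intro h
  have := eval_det_genericMatrix_submatrix A x σ
  rw [h, map_zero, hid, det_one] at this
  exact zero_ne_one this

end GenericMatrix

theorem stmt_6_general {F : Type} [Field F] [Fintype F] (n m : ℕ)
    (A : Fin n → Finset (Fin m))
    (σ : Fin n → Fin m) (hσ : Function.Injective σ) (hmem : ∀ i, σ i ∈ A i) :
    (1 : ℝ) - n / Fintype.card F ≤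
      ((Finset.univ.filter (fun g : Fin n × Fin m → F =>
          (Matrix.of fun i j => if j ∈ A i then g (i, j) else 0).rank = n)).card : ℝ)
        / Fintype.card (Fin n × Fin m → F) := by
  set P := ((genericMatrix (R := F) A).submatrix id σ).det
  have hP : P ≠ 0 := det_genericMatrix_submatrix_ne_zero A hσ hmem
  have hdeg : (P.totalDegree : ℝ) ≤ n := by
    exact_mod_cast (totalDegree_det_genericMatrix_submatrix_le A σ).trans_eq (Fintype.card_fin n)
  have hbad : #{g : Fin n × Fin m → F |
      ¬ (of fun i j => if j ∈ A i then g (i, j) else 0).rank = n} ≤ #{g | eval g P = 0} := by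
    refine card_le_card fun g => ?_
    simp only [mem_filter, mem_univ, true_and]
    contrapose!
    rw [eval_det_genericMatrix_submatrix]
    simpa using rank_eq_card_of_det_submatrix_ne_zero _ σ
  have hsplit := card_filter_add_card_filter_not (s := univ)
    fun g : Fin n × Fin m → F => (of fun i j => if j ∈ A i then g (i, j) else 0).rank = n
  rw [card_univ] at hsplit
  set T := Fintype.card (Fin n × Fin m → F)
  have hT : (0 : ℝ) < T := by exact_mod_cast Fintype.card_pos
  calc (1 : ℝ) - n / Fintype.card F
      ≤ 1 - #{g | eval g P = 0} / T :=
        sub_le_sub_left ((schwartz_zippel_totalDegree_fintype hP).trans (by gcongr)) 1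
    _ ≤ 1 - #{g : Fin n × Fin m → F |
          ¬ (of fun i j => if j ∈ A i then g (i, j) else 0).rank = n} / T := by gcongr
    _ = _ := by
      rw [eq_div_iff hT.ne', sub_mul, div_mul_cancel₀ _ hT.ne', one_mul, ← hsplit]
      push_cast
      ring

theorem stmt_6 {F : Type} [Field F] [Fintype F] (n m k : ℕ)
    (A : Fin n → Finset (Fin m)) (hk : ∀ i, (A i).card ≤ k)
    (σ : Fin n → Fin m) (hσ : Function.Injective σ) (hmem : ∀ i, σ i ∈ A i) :
    (1 : ℝ) - n / Fintype.card F ≤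
      ((Finset.univ.filter (fun g : Fin n × Fin m → F =>
          (Matrix.of fun i j => if j ∈ A i then g (i, j) else 0).rank = n)).card : ℝ)
        / Fintype.card (Fin n × Fin m → F) :=
  stmt_6_general n m A σ hσ hmem
end

section
/- (Schwartz–Zippel) Let F be a finite field and p ∈ F[X_1,…,X_N] a nonzero polynomial of total degree d. If a_1,…,a_N are chosen independently and uniformly from F, then the probability that p(a_1,…,a_N) = 0 is at most d/|F|. -/
open scoped Classical

theorem stmt_7 {F : Type} [Field F] [Fintype F] (N d : ℕ)
    (p : MvPolynomial (Fin N) F) (hp : p ≠ 0) (hd : p.totalDegree ≤ d) :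
    ((Finset.univ.filter (fun a : Fin N → F => MvPolynomial.eval a p = 0)).card : ℝ)
      / (Fintype.card F : ℝ) ^ N ≤ d / Fintype.card F := by
  have hsz := MvPolynomial.schwartz_zippel_totalDegree hp (Finset.univ : Finset F)
  rw [Fintype.piFinset_univ, Finset.card_univ] at hsz
  have hsz_real := (NNRat.cast_le (K := ℝ)).2 hsz
  push_cast at hsz_real
  calc _ ≤ (p.totalDegree : ℝ) / Fintype.card F := hsz_real
    _ ≤ d / Fintype.card F := by gcongr
end
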